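/- Let H(x) := ∫_{0}^{∞} Φ(u)·cos(xu) du. Then for every t > 0 one has ∫_{0}^{t} H(u) du = ∫_{0}^{∞} Φ(x)·(sin(xt)/x) dx > 0; in particular the average value of H on every interval [0, t], t > 0, is positive. -/

import Mathlib

open Real MeasureTheory Set Filter

/-- The Jacobi theta kernel `Φ(t) := ∑_{n=1}^∞ π n² (2π n² e^{4t} − 3)·exp(5t − π n² e^{4t})`. -/
noncomputable def jacobiPhi (t : ℝ) : ℝ :=
  ∑' n : ℕ, Real.pi * ((n : ℝ) + 1) ^ 2 *
    (2 * Real.pi * ((n : ℝ) + 1) ^ 2 * Real.exp (4 * t) - 3) *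
    Real.exp (5 * t - Real.pi * ((n : ℝ) + 1) ^ 2 * Real.exp (4 * t))

/-- `H(x) := ∫₀^∞ Φ(u)·cos(xu) du`, so that `H(x) = ξ(x/2)/8`. -/
noncomputable def xiH (x : ℝ) : ℝ :=
  ∫ u in Set.Ioi (0 : ℝ), jacobiPhi u * Real.cos (x * u)

/-!
Since `Φ(x) = O(e^{-x})`, Fubini and `∫₀ᵗ cos (u v) du = sin (v t) / v` give the identity.
For positivity write the integrand as `(Φ(x)/x) · sin (x t)`. Every term of the series for `Φ`,
divided by `x`, is strictly decreasing on `(0, ∞)`, hence so is `Φ(x)/x`. Pairing `x` in a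
half-period where `sin (x t) ≥ 0` with `x + π/t` shows that every period `[2kπ/t, 2(k+1)π/t]`
contributes a nonnegative amount, and the first one a positive amount.
-/

theorem intervalIntegral_cos_mul (t : ℝ) {v : ℝ} (hv : v ≠ 0) :
    ∫ u in (0 : ℝ)..t, cos (u * v) = sin (v * t) / v := by
  rw [intervalIntegral.integral_comp_mul_right cos hv, integral_cos]
  simp [mul_comm t, div_eq_inv_mul]

theorem intervalIntegral_integral_Ioi_mul_cos {φ : ℝ → ℝ} (hφ : IntegrableOn φ (Ioi 0))
    {t : ℝ} (ht : 0 ≤ t) :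
    ∫ u in (0 : ℝ)..t, ∫ v in Ioi (0 : ℝ), φ v * cos (u * v) =
      ∫ v in Ioi (0 : ℝ), φ v * (sin (v * t) / v) := by
  have hmeas : AEStronglyMeasurable (fun p : ℝ × ℝ => φ p.2 * cos (p.1 * p.2))
      ((volume.restrict (Ioc 0 t)).prod (volume.restrict (Ioi 0))) :=
    hφ.aestronglyMeasurable.comp_snd.mul (by fun_prop : Continuous fun p : ℝ × ℝ =>
      cos (p.1 * p.2)).aestronglyMeasurable
  have hint : Integrable (Function.uncurry fun u v => φ v * cos (u * v))
      ((volume.restrict (Ioc 0 t)).prod (volume.restrict (Ioi 0))) := by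
    refine ((integrable_const (1 : ℝ)).mul_prod hφ.norm).mono' hmeas (ae_of_all _ fun p => ?_)
    simpa [Function.uncurry, abs_mul] using
      mul_le_of_le_one_right (abs_nonneg (φ p.2)) (abs_cos_le_one (p.1 * p.2))
  rw [intervalIntegral.integral_of_le ht, integral_integral_swap hint]
  refine setIntegral_congr_fun measurableSet_Ioi fun v (hv : 0 < v) => ?_
  rw [integral_const_mul, ← intervalIntegral.integral_of_le ht,
    intervalIntegral_cos_mul t hv.ne']

theorem MeasureTheory.IntegrableOn.mul_sin_mul_div {φ : ℝ → ℝ} {s : Set ℝ}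
    (hφ : IntegrableOn φ s) (t : ℝ) : IntegrableOn (fun x => φ x * (sin (x * t) / x)) s := by
  have hmeas : Measurable fun x : ℝ => sin (x * t) / x := by fun_prop
  refine hφ.mul_bdd (c := |t|) hmeas.aestronglyMeasurable (ae_of_all _ fun x => ?_)
  rcases eq_or_ne x 0 with rfl | hx
  · simp
  rw [norm_div, norm_eq_abs, norm_eq_abs, div_le_iff₀ (abs_pos.2 hx), mul_comm |t|, ← abs_mul]
  exact abs_sin_le_abs

theorem intervalIntegral_add_comp_add_right {g : ℝ → ℝ} {a d : ℝ}
    (h₁ : IntervalIntegrable g volume a (a + d))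
    (h₂ : IntervalIntegrable g volume (a + d) (a + d + d)) :
    IntervalIntegrable (fun x => g x + g (x + d)) volume a (a + d) := by
  refine h₁.add ?_
  simpa using h₂.comp_add_right d

theorem intervalIntegral_eq_integral_add_comp_add_right {g : ℝ → ℝ} {a d : ℝ}
    (h₁ : IntervalIntegrable g volume a (a + d))
    (h₂ : IntervalIntegrable g volume (a + d) (a + d + d)) :
    ∫ x in a..a + d + d, g x = ∫ x in a..a + d, (g x + g (x + d)) := by
  rw [← intervalIntegral.integral_add_adjacent_intervals h₁ h₂,
    intervalIntegral.integral_add h₁ (by simpa using h₂.comp_add_right d),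
    intervalIntegral.integral_comp_add_right]

theorem MeasureTheory.IntegrableOn.intervalIntegrable_of_Ici {g : ℝ → ℝ} {c a b : ℝ}
    (hg : IntegrableOn g (Ici c)) (ha : c ≤ a) (hab : a ≤ b) :
    IntervalIntegrable g volume a b :=
  (hg.mono_set (uIcc_of_le hab ▸ Icc_subset_Ici_iff hab |>.2 ha)).intervalIntegrable

section SineIntegral

variable {f : ℝ → ℝ} {t : ℝ}

theorem sin_add_pi_div_mul (ht : t ≠ 0) (x : ℝ) : sin ((x + π / t) * t) = -sin (x * t) := by
  rw [add_mul, div_mul_cancel₀ _ ht, sin_add_pi]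

theorem sin_mul_nonneg_of_mem_Icc (ht : 0 < t) (k : ℕ) {x : ℝ}
    (hx : x ∈ Icc (k * (2 * (π / t))) (k * (2 * (π / t)) + π / t)) : 0 ≤ sin (x * t) := by
  have e : (π / t) * t = π := div_mul_cancel₀ _ ht.ne'
  have h₁ := mul_le_mul_of_nonneg_right hx.1 ht.le
  have h₂ := mul_le_mul_of_nonneg_right hx.2 ht.le
  rw [← sin_sub_nat_mul_two_pi _ k]
  refine sin_nonneg_of_mem_Icc ⟨?_, ?_⟩ <;> nlinarith

theorem mul_sin_add_mul_sin_add_pi_div (ht : t ≠ 0) (x : ℝ) :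
    f x * sin (x * t) + f (x + π / t) * sin ((x + π / t) * t) =
      (f x - f (x + π / t)) * sin (x * t) := by
  rw [sin_add_pi_div_mul ht]
  ring

theorem intervalIntegral_mul_sin_period_nonneg (ht : 0 < t)
    (hg : IntegrableOn (fun x => f x * sin (x * t)) (Ici 0)) (hf : AntitoneOn f (Ioi 0)) (k : ℕ) :
    0 ≤ ∫ x in k * (2 * (π / t))..(k + 1) * (2 * (π / t)), f x * sin (x * t) := by
  have hd : 0 < π / t := by positivity
  have ha : 0 ≤ k * (2 * (π / t)) := by positivity
  rw [show (k + 1) * (2 * (π / t)) = k * (2 * (π / t)) + π / t + π / t by ring,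
    intervalIntegral_eq_integral_add_comp_add_right (hg.intervalIntegrable_of_Ici ha (by linarith))
      (hg.intervalIntegrable_of_Ici (by linarith) (by linarith))]
  refine intervalIntegral.integral_nonneg (by linarith) fun x hx => ?_
  rw [mul_sin_add_mul_sin_add_pi_div ht.ne']
  rcases (ha.trans hx.1).eq_or_lt with rfl | hx₀
  · simp
  · exact mul_nonneg (sub_nonneg.2 (hf hx₀ (by simp only [mem_Ioi]; linarith) (by linarith)))
      (sin_mul_nonneg_of_mem_Icc ht k hx)

theorem intervalIntegral_mul_sin_first_period_pos (ht : 0 < t)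
    (hg : IntegrableOn (fun x => f x * sin (x * t)) (Ici 0)) (hf : StrictAntiOn f (Ioi 0)) :
    0 < ∫ x in (0 : ℝ)..2 * (π / t), f x * sin (x * t) := by
  have hd : 0 < π / t := by positivity
  have h₁ := hg.intervalIntegrable_of_Ici le_rfl (by linarith : 0 ≤ 0 + π / t)
  have h₂ := hg.intervalIntegrable_of_Ici (by linarith)
    (by linarith : 0 + π / t ≤ 0 + π / t + π / t)
  rw [show 2 * (π / t) = 0 + π / t + π / t by ring,
    intervalIntegral_eq_integral_add_comp_add_right h₁ h₂]
  refine intervalIntegral.intervalIntegral_pos_of_pos_on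
    (intervalIntegral_add_comp_add_right h₁ h₂) (fun x hx => ?_) (by linarith)
  rw [zero_add] at hx
  rw [mul_sin_add_mul_sin_add_pi_div ht.ne']
  have hxt : x * t < π := (lt_div_iff₀ ht).1 hx.2
  exact mul_pos (sub_pos.2 (hf hx.1 (by simp only [mem_Ioi]; linarith [hx.1]) (by linarith)))
    (sin_pos_of_pos_of_lt_pi (mul_pos hx.1 ht) hxt)

theorem integral_Ioi_mul_sin_pos (ht : 0 < t)
    (hg : IntegrableOn (fun x => f x * sin (x * t)) (Ioi 0)) (hf : StrictAntiOn f (Ioi 0)) :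
    0 < ∫ x in Ioi (0 : ℝ), f x * sin (x * t) := by
  have hg' := (integrableOn_Ici_iff_integrableOn_Ioi (by simp)).2 hg
  have hp : 0 < 2 * (π / t) := by positivity
  have hsum (n : ℕ) : ∫ x in (0 : ℝ)..n * (2 * (π / t)), f x * sin (x * t) =
      ∑ k ∈ Finset.range n,
        ∫ x in k * (2 * (π / t))..(k + 1) * (2 * (π / t)), f x * sin (x * t) := by
    have := intervalIntegral.sum_integral_adjacent_intervals
      (a := fun k : ℕ => k * (2 * (π / t))) (μ := volume) (n := n) fun k _ =>
        hg'.intervalIntegrable_of_Ici (by positivity) (by gcongr; simp)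
    push_cast at this
    simpa using this.symm
  have hlim := intervalIntegral_tendsto_integral_Ioi 0 hg
    (tendsto_natCast_atTop_atTop.atTop_mul_const hp)
  refine (intervalIntegral_mul_sin_first_period_pos ht hg' hf).trans_le
    (ge_of_tendsto hlim (eventually_atTop.2 ⟨1, fun n hn => ?_⟩))
  rw [hsum]
  simpa using Finset.single_le_sum
    (fun k _ => intervalIntegral_mul_sin_period_nonneg ht hg' hf.antitoneOn k)
    (Finset.mem_range.2 hn)

end SineIntegral

noncomputable def thetaTerm (a x : ℝ) : ℝ :=
  a * (2 * (a * exp (4 * x)) - 3) * exp (5 * x - a * exp (4 * x))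

theorem jacobiPhi_eq_tsum_thetaTerm (x : ℝ) :
    jacobiPhi x = ∑' n : ℕ, thetaTerm (π * ((n : ℝ) + 1) ^ 2) x :=
  tsum_congr fun n => by unfold thetaTerm; ring

theorem pi_le_pi_mul_add_one_sq (n : ℕ) : π ≤ π * ((n : ℝ) + 1) ^ 2 :=
  le_mul_of_one_le_right pi_pos.le (one_le_pow₀ (by simp))

theorem continuous_thetaTerm (a : ℝ) : Continuous (thetaTerm a) := by
  unfold thetaTerm
  fun_prop

theorem thetaTerm_pos {a x : ℝ} (ha : 3 / 2 < a) (hx : 0 ≤ x) : 0 < thetaTerm a x := by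
  have : a ≤ a * exp (4 * x) := le_mul_of_one_le_right (by linarith) (one_le_exp (by linarith))
  exact mul_pos (mul_pos (by linarith) (by linarith)) (exp_pos _)

theorem thetaTerm_le {a x : ℝ} (ha : 3 ≤ a) (hx : 0 ≤ x) :
    thetaTerm a x ≤ 16 * exp (-(a / 2)) * exp (-x) := by
  set z := a * exp (4 * x)
  have hza : a ≤ z := le_mul_of_one_le_right (by linarith) (one_le_exp (by linarith))
  have hzx : a * (1 + 4 * x) ≤ z :=
    mul_le_mul_of_nonneg_left (by linarith [add_one_le_exp (4 * x)]) (by linarith)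
  have hz2 : z ^ 2 ≤ 8 * exp (z / 2) := by
    have := pow_div_factorial_le_exp (z / 2) (by linarith) 2
    norm_num [Nat.factorial] at this
    linarith
  calc thetaTerm a x = a * (2 * z - 3) * exp (5 * x - z) := rfl
    _ ≤ 2 * z ^ 2 * exp (5 * x - z) := by gcongr ?_ * _; nlinarith
    _ ≤ 16 * exp (z / 2) * exp (5 * x - z) := by gcongr ?_ * _; linarith
    _ = 16 * exp (5 * x - z / 2) := by rw [mul_assoc, ← exp_add]; ring_nf
    _ ≤ 16 * exp (-(a / 2) + -x) := by gcongr; nlinarith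
    _ = 16 * exp (-(a / 2)) * exp (-x) := by rw [exp_add, mul_assoc]

theorem summable_exp_neg_pi_mul_add_one_sq_div_two :
    Summable fun n : ℕ => exp (-(π * ((n : ℝ) + 1) ^ 2 / 2)) := by
  refine summable_exp_neg_nat.of_nonneg_of_le (fun n => (exp_pos _).le) fun n => ?_
  gcongr
  nlinarith [pi_gt_three, sq_nonneg ((n : ℝ) + 1)]

theorem three_le_pi_mul_add_one_sq (n : ℕ) : 3 ≤ π * ((n : ℝ) + 1) ^ 2 :=
  pi_gt_three.le.trans (pi_le_pi_mul_add_one_sq n)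

theorem summable_thetaTerm {x : ℝ} (hx : 0 ≤ x) :
    Summable fun n : ℕ => thetaTerm (π * ((n : ℝ) + 1) ^ 2) x :=
  ((summable_exp_neg_pi_mul_add_one_sq_div_two.mul_left 16).mul_right (exp (-x))).of_nonneg_of_le
    (fun n => (thetaTerm_pos (by linarith [three_le_pi_mul_add_one_sq n]) hx).le)
    fun n => thetaTerm_le (three_le_pi_mul_add_one_sq n) hx

theorem jacobiPhi_nonneg {x : ℝ} (hx : 0 ≤ x) : 0 ≤ jacobiPhi x := by
  rw [jacobiPhi_eq_tsum_thetaTerm]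
  exact tsum_nonneg fun n => (thetaTerm_pos (by linarith [three_le_pi_mul_add_one_sq n]) hx).le

theorem jacobiPhi_le {x : ℝ} (hx : 0 ≤ x) :
    jacobiPhi x ≤ (∑' n : ℕ, 16 * exp (-(π * ((n : ℝ) + 1) ^ 2 / 2))) * exp (-x) := by
  rw [jacobiPhi_eq_tsum_thetaTerm, ← tsum_mul_right]
  exact (summable_thetaTerm hx).tsum_le_tsum
    (fun n => thetaTerm_le (three_le_pi_mul_add_one_sq n) hx)
    ((summable_exp_neg_pi_mul_add_one_sq_div_two.mul_left 16).mul_right _)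

theorem continuousOn_jacobiPhi : ContinuousOn jacobiPhi (Ici 0) := by
  rw [show jacobiPhi = _ from funext jacobiPhi_eq_tsum_thetaTerm]
  refine continuousOn_tsum (fun n => (continuous_thetaTerm _).continuousOn)
    (summable_exp_neg_pi_mul_add_one_sq_div_two.mul_left 16) fun n x (hx : 0 ≤ x) => ?_
  rw [norm_of_nonneg (thetaTerm_pos (by linarith [three_le_pi_mul_add_one_sq n]) hx).le]
  refine (thetaTerm_le (three_le_pi_mul_add_one_sq n) hx).trans ?_
  exact mul_le_of_le_one_right (by positivity) (exp_le_one_iff.2 (by linarith))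

theorem integrableOn_jacobiPhi : IntegrableOn jacobiPhi (Ioi 0) := by
  refine ((exp_neg_integrableOn_Ioi 0 one_pos).const_mul
    (∑' n : ℕ, 16 * exp (-(π * ((n : ℝ) + 1) ^ 2 / 2)))).mono'
    ((continuousOn_jacobiPhi.mono Ioi_subset_Ici_self).aestronglyMeasurable measurableSet_Ioi)
    ((ae_restrict_mem measurableSet_Ioi).mono fun x (hx : 0 < x) => ?_)
  rw [norm_of_nonneg (jacobiPhi_nonneg hx.le), neg_one_mul]
  exact jacobiPhi_le hx.le

theorem hasDerivAt_thetaTerm (a x : ℝ) :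
    HasDerivAt (thetaTerm a) (a * exp (5 * x - a * exp (4 * x)) *
      (30 * (a * exp (4 * x)) - 8 * (a * exp (4 * x)) ^ 2 - 15)) x := by
  have hz : HasDerivAt (fun y => a * exp (4 * y)) (a * (exp (4 * x) * (4 * 1))) x :=
    (((hasDerivAt_id x).const_mul 4).exp).const_mul a
  exact ((((hz.const_mul 2).sub_const 3).const_mul a).mul
    (((hasDerivAt_id x).const_mul 5).sub hz).exp).congr_deriv
    (by simp only [Pi.sub_apply, id]; ring)

/-- With `z = a e^{4x}` this is `x T'(x) < T(x)` for `T = thetaTerm a`, after cancelling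
`a e^{5x - z} > 0`. The quadratic is positive only for `0.59 < z < 3.16`, and together with
`z ≥ π (1 + 4x)` that forces `x < 0.002`. -/
theorem mul_quadratic_lt_of_pi_mul_le {x z : ℝ} (hx : 0 ≤ x) (hz : π * (1 + 4 * x) ≤ z) :
    x * (30 * z - 8 * z ^ 2 - 15) < 2 * z - 3 := by
  have hπ₁ := pi_gt_d6
  have hπ₂ := pi_lt_d6
  rcases le_or_gt (30 * z - 8 * z ^ 2 - 15) 0 with hQ | hQ
  · nlinarith [mul_nonpos_of_nonneg_of_nonpos hx hQ]
  · have hz4 : z < 4 := by nlinarith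
    have hx₀ : x < 7 / 100 := by nlinarith
    have hQ₀ : 30 * z - 8 * z ^ 2 - 15 ≤ 3 / 10 := by
      nlinarith [mul_nonneg (by nlinarith : 0 ≤ z - π) (by nlinarith : 0 ≤ 8 * (z + π) - 30)]
    nlinarith [mul_le_mul_of_nonneg_left hQ₀ hx]

theorem thetaTerm_div_strictAntiOn {a : ℝ} (ha : π ≤ a) :
    StrictAntiOn (fun x => thetaTerm a x / x) (Ioi 0) := by
  refine strictAntiOn_of_deriv_neg (convex_Ioi 0)
    ((continuous_thetaTerm a).continuousOn.div continuousOn_id fun x hx => ne_of_gt hx)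
    fun x hx => ?_
  rw [interior_Ioi] at hx
  have hx : 0 < x := hx
  rw [show (fun x => thetaTerm a x / x) = thetaTerm a / id from rfl,
    ((hasDerivAt_thetaTerm a x).div (hasDerivAt_id x) hx.ne').deriv]
  refine div_neg_of_neg_of_pos ?_ (by positivity)
  have hz : π * (1 + 4 * x) ≤ a * exp (4 * x) :=
    mul_le_mul ha (by linarith [add_one_le_exp (4 * x)]) (by linarith) (by linarith [pi_pos])
  have := mul_neg_of_pos_of_neg
    (mul_pos (by linarith [pi_pos] : 0 < a) (exp_pos (5 * x - a * exp (4 * x))))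
    (sub_neg.2 (mul_quadratic_lt_of_pi_mul_le hx.le hz))
  convert this using 1
  simp only [thetaTerm, id]
  ring

theorem jacobiPhi_div_strictAntiOn : StrictAntiOn (fun x => jacobiPhi x / x) (Ioi 0) := by
  intro x (hx : 0 < x) y (hy : 0 < y) hxy
  simp only [jacobiPhi_eq_tsum_thetaTerm, ← tsum_div_const]
  refine Summable.tsum_lt_tsum_of_nonneg (i := 0)
    (fun n => div_nonneg
      (thetaTerm_pos (by linarith [three_le_pi_mul_add_one_sq n]) hy.le).le hy.le)
    (fun n => (thetaTerm_div_strictAntiOn (pi_le_pi_mul_add_one_sq n) hx hy hxy).le)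
    (thetaTerm_div_strictAntiOn (pi_le_pi_mul_add_one_sq 0) hx hy hxy)
    ((summable_thetaTerm hx.le).div_const x)

/-- **Remark 4.3 (b).** For every `t > 0`,
`∫₀ᵗ H(u) du = ∫₀^∞ Φ(x)·(sin(xt)/x) dx > 0`; in particular the average value of `H` on
every interval `[0, t]`, `t > 0`, is positive. -/
theorem avg_H_pos :
    ∀ t : ℝ, 0 < t →
      (∫ u in (0 : ℝ)..t, xiH u) =
        (∫ x in Set.Ioi (0 : ℝ), jacobiPhi x * (Real.sin (x * t) / x)) ∧
      0 < ∫ x in Set.Ioi (0 : ℝ), jacobiPhi x * (Real.sin (x * t) / x) := by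
  intro t ht
  have hdiv : (fun x => jacobiPhi x * (sin (x * t) / x)) =
      fun x => jacobiPhi x / x * sin (x * t) := by
    ext x
    ring
  refine ⟨intervalIntegral_integral_Ioi_mul_cos integrableOn_jacobiPhi ht.le, ?_⟩
  rw [hdiv]
  exact integral_Ioi_mul_sin_pos ht (hdiv ▸ integrableOn_jacobiPhi.mul_sin_mul_div t)
    jacobiPhi_div_strictAntiOn
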